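/- arXiv:2405.09309 — 2 statements merged into one kernel-verified Lean document; each statement's English description precedes it below -/
import Mathlib

section
/- Let 𝒴 be a nonempty finite set and let M ≥ 2^{|𝒴|} be an integer. For any probability mass functions μ_1, …, μ_M on 𝒴 and any subsets D_1, …, D_M ⊆ 𝒴, one has max_{1≤i≤M} μ_i(𝒴 \ D_i) + max_{1≤i≠j≤M} μ_i(D_j) ≥ 1. (Applied with 𝒴 = (Fin q)^{nl}, μ_i the output distribution of message i, and D_i the decoding sets, this shows that any identification-feedback code for the q-ary uniform permutation channel over l blocks of length n with 2^{q^{nl}} messages has λ_1 + λ_2 ≥ 1.) -/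
open Finset

/-- `μ` is a probability mass function on a finite type. -/
def IsPMF {α : Type*} [Fintype α] (μ : α → ℝ) : Prop :=
  (∀ a, 0 ≤ μ a) ∧ ∑ a, μ a = 1

/-!
Pigeonhole on the decoding sets: there are only `2^|𝒴|` subsets of `𝒴`.
If two messages `i ≠ j` share a decoding set, then `μ_i(𝒴 \ D_i) + μ_i(D_j) = μ_i(𝒴) = 1`.
Otherwise `i ↦ D_i` is a bijection onto the subsets of `𝒴`, so some `D_i` is empty and
`μ_i(𝒴 \ D_i) = 1` already, while `λ₂ ≥ 0`.
-/

lemma IsPMF.sum_sdiff_add_sum {Y : Type*} [Fintype Y] [DecidableEq Y] {μ : Y → ℝ}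
    (hμ : IsPMF μ) (D : Finset Y) : ∑ y ∈ univ \ D, μ y + ∑ y ∈ D, μ y = 1 := by
  rw [sum_sdiff (subset_univ D), hμ.2]

lemma exists_eq_empty_of_injective {ι Y : Type*} [Fintype Y] {D : ι → Finset Y}
    (hD : Function.Injective D) (hcard : 2 ^ Fintype.card Y ≤ Nat.card ι) : ∃ i, D i = ∅ :=
  (hD.bijective_of_nat_card_le (by rwa [Nat.card_eq_fintype_card, Fintype.card_finset])).2 ∅

section IdentificationCode

variable {ι Y : Type*}

/-- `λ₂`. When `ι` has a single element the supremum is over the empty family, which is `0`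
in `ℝ`. -/
noncomputable def falseAcceptance (μ : ι → Y → ℝ) (D : ι → Finset Y) : ℝ :=
  ⨆ i, ⨆ j, ⨆ (_ : i ≠ j), ∑ y ∈ D j, μ i y

noncomputable def missedDetection [Fintype Y] [DecidableEq Y] (μ : ι → Y → ℝ)
    (D : ι → Finset Y) : ℝ :=
  ⨆ i, ∑ y ∈ univ \ D i, μ i y

variable {μ : ι → Y → ℝ} {D : ι → Finset Y}

lemma falseAcceptance_nonneg (hμ : ∀ i y, 0 ≤ μ i y) : 0 ≤ falseAcceptance μ D :=
  Real.iSup_nonneg fun i ↦ Real.iSup_nonneg fun _ ↦ Real.iSup_nonneg fun _ ↦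
    sum_nonneg fun y _ ↦ hμ i y

lemma sum_le_falseAcceptance [Finite ι] {i j : ι} (hij : i ≠ j) :
    ∑ y ∈ D j, μ i y ≤ falseAcceptance μ D :=
  calc ∑ y ∈ D j, μ i y = ⨆ (_ : i ≠ j), ∑ y ∈ D j, μ i y :=
      (ciSup_pos (f := fun _ ↦ ∑ y ∈ D j, μ i y) hij).symm
    _ ≤ ⨆ j', ⨆ (_ : i ≠ j'), ∑ y ∈ D j', μ i y :=
      le_ciSup (f := fun j' ↦ ⨆ (_ : i ≠ j'), ∑ y ∈ D j', μ i y) (Set.finite_range _).bddAbove j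
    _ ≤ falseAcceptance μ D :=
      le_ciSup (f := fun i ↦ ⨆ j', ⨆ (_ : i ≠ j'), ∑ y ∈ D j', μ i y)
        (Set.finite_range _).bddAbove i

variable [Fintype Y] [DecidableEq Y]

lemma sum_sdiff_le_missedDetection [Finite ι] (i : ι) :
    ∑ y ∈ univ \ D i, μ i y ≤ missedDetection μ D :=
  le_ciSup (f := fun i ↦ ∑ y ∈ univ \ D i, μ i y) (Set.finite_range _).bddAbove i

lemma one_le_missedDetection_add_falseAcceptance_of_eq [Finite ι] (hμ : ∀ i, IsPMF (μ i))
    {i j : ι} (hij : i ≠ j) (hD : D i = D j) :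
    1 ≤ missedDetection μ D + falseAcceptance μ D := by
  have hmiss := sum_sdiff_le_missedDetection (μ := μ) (D := D) i
  rw [hD] at hmiss
  linarith [(hμ i).sum_sdiff_add_sum (D j), sum_le_falseAcceptance (μ := μ) (D := D) hij]

lemma one_le_missedDetection_add_falseAcceptance_of_eq_empty [Finite ι]
    (hμ : ∀ i, IsPMF (μ i)) {i : ι} (hD : D i = ∅) :
    1 ≤ missedDetection μ D + falseAcceptance μ D := by
  have hmiss := sum_sdiff_le_missedDetection (μ := μ) (D := D) i
  rw [hD, sdiff_empty, (hμ i).2] at hmiss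
  linarith [falseAcceptance_nonneg (D := D) fun i ↦ (hμ i).1]

end IdentificationCode

theorem idFeedbackConverse_general {Y : Type*} [Fintype Y] [DecidableEq Y]
    (M : ℕ) (hM : 2 ^ Fintype.card Y ≤ M)
    (μ : Fin M → Y → ℝ) (hμ : ∀ i, IsPMF (μ i))
    (D : Fin M → Finset Y) :
    1 ≤ (⨆ i, ∑ y ∈ Finset.univ \ D i, μ i y) +
        (⨆ i, ⨆ j, ⨆ (_ : i ≠ j), ∑ y ∈ D j, μ i y) := by
  change 1 ≤ missedDetection μ D + falseAcceptance μ D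
  by_cases hD : Function.Injective D
  · obtain ⟨i, hi⟩ := exists_eq_empty_of_injective hD (by rwa [Nat.card_eq_fintype_card,
      Fintype.card_fin])
    exact one_le_missedDetection_add_falseAcceptance_of_eq_empty hμ hi
  · obtain ⟨i, j, hDij, hij⟩ := Function.not_injective_iff.mp hD
    exact one_le_missedDetection_add_falseAcceptance_of_eq hμ hij hDij

/-- If a nonempty finite set `𝒴` carries `M ≥ 2^|𝒴|` pmfs `μ_1, …, μ_M` and decoding sets
`D_1, …, D_M ⊆ 𝒴`, then `max_i μ_i(𝒴 \ D_i) + max_{i≠j} μ_i(D_j) ≥ 1`. -/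
theorem idFeedbackConverse {Y : Type*} [Fintype Y] [DecidableEq Y] [Nonempty Y]
    (M : ℕ) (hM : 2 ^ Fintype.card Y ≤ M)
    (μ : Fin M → Y → ℝ) (hμ : ∀ i, IsPMF (μ i))
    (D : Fin M → Finset Y) :
    1 ≤ (⨆ i, ∑ y ∈ Finset.univ \ D i, μ i y) +
        (⨆ i, ⨆ j, ⨆ (_ : i ≠ j), ∑ y ∈ D j, μ i y) :=
  idFeedbackConverse_general M hM μ hμ D
end

section
/- Let 𝒴 be a finite set, M ≥ 2 an integer, μ_1, …, μ_M probability mass functions on 𝒴 (the output distributions of the M messages), and P_1, …, P_M : 𝒴 → [0,1] (the stochastic decoders). Define λ_{i→j} = Σ_y μ_i(y)·P_j(y) for i ≠ j, λ_{i↛i} = Σ_y μ_i(y)·(1 − P_i(y)), and λ₂ = max_{i≠j} λ_{i→j}. Then the sets D_i = {y ∈ 𝒴 : P_i(y) > √λ₂} satisfy, for all i ≠ j, μ_i(D_j) ≤ √(λ_{i→j}), and for all i, μ_i(𝒴 \ D_i) ≤ λ_{i↛i} + √λ₂. That is, every identification code with stochastic decoders induces an identification code with deterministic decoders and the same encoder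 whose false-acceptance errors are at most √(λ_{i→j}) and whose missed-detection errors are at most λ_{i↛i} + √λ₂. -/
open Finset

/-- The false-acceptance probability `λ_{i→j} = Σ_y μ_i(y)·P_j(y)` of a stochastic-decoder
identification code. -/
noncomputable def lamFAst {Y : Type*} [Fintype Y] {M : ℕ}
    (μ : Fin M → Y → ℝ) (P : Fin M → Y → ℝ) (i j : Fin M) : ℝ :=
  ∑ y, μ i y * P j y

/-- The missed-detection probability `λ_{i↛i} = Σ_y μ_i(y)·(1 - P_i(y))` of a
stochastic-decoder identification code. -/
noncomputable def lamMDst {Y : Type*} [Fintype Y] {M : ℕ}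
    (μ : Fin M → Y → ℝ) (P : Fin M → Y → ℝ) (i : Fin M) : ℝ :=
  ∑ y, μ i y * (1 - P i y)

/-- The maximal false-acceptance probability `λ₂ = max_{i≠j} λ_{i→j}`. -/
noncomputable def lamIIst {Y : Type*} [Fintype Y] {M : ℕ}
    (μ : Fin M → Y → ℝ) (P : Fin M → Y → ℝ) : ℝ :=
  ⨆ i, ⨆ j, ⨆ (_ : i ≠ j), lamFAst μ P i j

/-- From stochastic to deterministic decoders: the sets `D_i = {y : P_i(y) > √λ₂}` give a
deterministic-decoder identification code with the same encoder, false-acceptance errors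
at most `√(λ_{i→j})`, and missed-detection errors at most `λ_{i↛i} + √λ₂`. -/
theorem stochasticToDeterministicDecoders {Y : Type*} [Fintype Y] [DecidableEq Y]
    (M : ℕ) (hM : 2 ≤ M)
    (μ : Fin M → Y → ℝ) (hμ : ∀ i, IsPMF (μ i))
    (P : Fin M → Y → ℝ) (hP : ∀ i y, P i y ∈ Set.Icc (0 : ℝ) 1) :
    ∃ D : Fin M → Finset Y,
      (∀ i y, y ∈ D i ↔ Real.sqrt (lamIIst μ P) < P i y) ∧
      (∀ i j, i ≠ j → ∑ y ∈ D j, μ i y ≤ Real.sqrt (lamFAst μ P i j)) ∧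
      (∀ i, ∑ y ∈ Finset.univ \ D i, μ i y ≤ lamMDst μ P i + Real.sqrt (lamIIst μ P)) := by
  classical
  set s := Real.sqrt (lamIIst μ P) with hs
  have hsnn : 0 ≤ s := Real.sqrt_nonneg _
  have hFAnn : ∀ i j : Fin M, 0 ≤ lamFAst μ P i j := fun i j =>
    Finset.sum_nonneg fun y _ => mul_nonneg ((hμ i).1 y) (hP j y).1
  have hle : ∀ i j : Fin M, i ≠ j → lamFAst μ P i j ≤ lamIIst μ P := by
    intro i j hij
    have h1 : lamFAst μ P i j = ⨆ (_ : i ≠ j), lamFAst μ P i j := (ciSup_pos (f := fun _ : i ≠ j => lamFAst μ P i j) hij).symm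
    calc lamFAst μ P i j = ⨆ (_ : i ≠ j), lamFAst μ P i j := h1
      _ ≤ ⨆ j, ⨆ (_ : i ≠ j), lamFAst μ P i j :=
          le_ciSup (f := fun j => ⨆ (_ : i ≠ j), lamFAst μ P i j)
            (Set.Finite.bddAbove (Set.finite_range _)) j
      _ ≤ lamIIst μ P :=
          le_ciSup (f := fun i => ⨆ j, ⨆ (_ : i ≠ j), lamFAst μ P i j)
            (Set.Finite.bddAbove (Set.finite_range _)) i
  have hIInn : 0 ≤ lamIIst μ P := by
    have h01 : (⟨0, by omega⟩ : Fin M) ≠ ⟨1, by omega⟩ := by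
      simp [Fin.ext_iff]
    exact le_trans (hFAnn _ _) (hle _ _ h01)
  refine ⟨fun i => Finset.univ.filter (fun y => s < P i y), fun i y => by simp, ?_, ?_⟩
  · intro i j hij
    set L := lamFAst μ P i j with hL
    have hsum : (∑ y ∈ Finset.univ.filter (fun y => s < P j y), μ i y) * s ≤ L := by
      rw [Finset.sum_mul]
      refine le_trans (Finset.sum_le_sum fun y hy => ?_)
        (Finset.sum_le_sum_of_subset_of_nonneg (Finset.filter_subset _ _)
          (fun y _ _ => mul_nonneg ((hμ i).1 y) (hP j y).1))
      exact mul_le_mul_of_nonneg_left (le_of_lt (Finset.mem_filter.mp hy).2) ((hμ i).1 y)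
    rcases lt_or_eq_of_le hsnn with hpos | hzero
    · have h1 : (∑ y ∈ Finset.univ.filter (fun y => s < P j y), μ i y) ≤ L / s :=
        (le_div_iff₀ hpos).mpr hsum
      refine h1.trans ?_
      rw [div_le_iff₀ hpos]
      calc L = Real.sqrt L * Real.sqrt L := (Real.mul_self_sqrt (hFAnn i j)).symm
        _ ≤ Real.sqrt L * s :=
          mul_le_mul_of_nonneg_left (Real.sqrt_le_sqrt (hle i j hij)) (Real.sqrt_nonneg _)
    · -- s = 0, so lamIIst = 0, so L = 0
      have hII0 : lamIIst μ P = 0 := by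
        have := Real.sqrt_eq_zero hIInn |>.mp hzero.symm
        exact this
      have hL0 : L = 0 := le_antisymm (by rw [← hII0]; exact hle i j hij) (hFAnn i j)
      have hterm : ∀ y ∈ (Finset.univ : Finset Y), μ i y * P j y = 0 := by
        intro y hy
        have := (Finset.sum_eq_zero_iff_of_nonneg
          (fun y _ => mul_nonneg ((hμ i).1 y) (hP j y).1)).mp hL0
        exact this y hy
      have : (∑ y ∈ Finset.univ.filter (fun y => s < P j y), μ i y) = 0 := by
        refine Finset.sum_eq_zero fun y hy => ?_
        have hPy : 0 < P j y := by
          rw [hzero]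
          exact (Finset.mem_filter.mp hy).2
        have := hterm y (Finset.mem_univ y)
        rcases mul_eq_zero.mp this with h | h
        · exact h
        · exact absurd h (ne_of_gt hPy)
      rw [this]
      exact Real.sqrt_nonneg _
  · intro i
    have hsub : ∀ y ∈ Finset.univ \ Finset.univ.filter (fun y => s < P i y),
        μ i y ≤ μ i y * (1 - P i y) + μ i y * s := by
      intro y hy
      have hPle : P i y ≤ s := by
        simp only [Finset.mem_sdiff, Finset.mem_filter, Finset.mem_univ, true_and,
          not_lt] at hy
        exact hy
      nlinarith [(hμ i).1 y, (hP i y).1, (hP i y).2]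
    calc ∑ y ∈ Finset.univ \ Finset.univ.filter (fun y => s < P i y), μ i y
        ≤ ∑ y ∈ Finset.univ \ Finset.univ.filter (fun y => s < P i y),
            (μ i y * (1 - P i y) + μ i y * s) := Finset.sum_le_sum hsub
      _ ≤ ∑ y, (μ i y * (1 - P i y) + μ i y * s) :=
          Finset.sum_le_sum_of_subset_of_nonneg (Finset.sdiff_subset.trans (le_refl _))
            (fun y _ _ => add_nonneg
              (mul_nonneg ((hμ i).1 y) (by linarith [(hP i y).2]))
              (mul_nonneg ((hμ i).1 y) hsnn))
      _ = lamMDst μ P i + (∑ y, μ i y) * s := by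
          rw [Finset.sum_add_distrib, Finset.sum_mul]; rfl
      _ = lamMDst μ P i + s := by rw [(hμ i).2, one_mul]
end
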